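/- Let N ≥ 1, let C ⊆ ℂ^N be a compact set, let (R_n) be a sequence of positive real numbers with R_n → ∞, and for each n let g_n : Δ_{R_n} → ℂ^N be a holomorphic map with image contained in C and satisfying ‖g_n′(z)‖ ≤ R_n² / (R_n² − |z|²) for all z ∈ Δ_{R_n}. Then there exist a strictly increasing sequence of indices (n_k) and a holomorphic map g : ℂ → ℂ^N with image contained in C such that g_{n_k} converges to g locally uniformly on ℂ and g_{n_k}′(0) → g′(0). In particular, if ‖g_n′(0)‖ = 1 for every n, then ‖g′(0)‖ = 1. -/

import Mathlib

/-!
On every disc `Δ_r` with `2r ≤ R_n` the bound on `g_n′` gives `‖g_n′‖ ≤ 4/3`, so the tail of the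
sequence is uniformly `2`-Lipschitz with values in `C` on each compact set. Clamping the variable to
a square turns each `g_n` into a globally `2`-Lipschitz map `ℂ → C` that agrees with `g_n` on a disc
of radius tending to infinity. By Arzelà–Ascoli these maps lie in a compact subset of the metrizable
space `C(ℂ, ℂ^N)`, so a subsequence converges locally uniformly. Weierstrass' theorem makes the
limit entire, with the derivatives converging, and closedness of `C` keeps its values in `C`.
-/

open Filter Metric Topology NNReal

namespace Complex

def clampSquare (r : ℝ) (z : ℂ) : ℂ :=
  ⟨max (-r) (min r z.re), max (-r) (min r z.im)⟩

lemma lipschitzWith_clampSquare (r : ℝ) : LipschitzWith 1 (clampSquare r) := by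
  have hclamp : ∀ a b : ℝ, |max (-r) (min r a) - max (-r) (min r b)| ≤ |a - b| := fun a b => by
    simpa [Real.dist_eq] using ((LipschitzWith.id.const_min r).const_max (-r)).dist_le_mul a b
  refine LipschitzWith.of_dist_le_mul fun z w => ?_
  rw [NNReal.coe_one, one_mul, dist_eq_re_im, dist_eq_re_im]
  exact Real.sqrt_le_sqrt (add_le_add (sq_le_sq.2 (hclamp _ _)) (sq_le_sq.2 (hclamp _ _)))

lemma clampSquare_of_norm_le {r : ℝ} {z : ℂ} (hz : ‖z‖ ≤ r) : clampSquare r z = z := by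
  have hre := abs_le.1 ((abs_re_le_norm z).trans hz)
  have him := abs_le.1 ((abs_im_le_norm z).trans hz)
  apply Complex.ext <;> simp [clampSquare, hre, him]

lemma norm_clampSquare_le {r : ℝ} (hr : 0 ≤ r) (z : ℂ) : ‖clampSquare r z‖ ≤ 2 * r := by
  have hcoord : ∀ a : ℝ, |max (-r) (min r a)| ≤ r := fun a =>
    abs_le.2 ⟨le_max_left _ _, max_le (by linarith) (min_le_left _ _)⟩
  calc ‖clampSquare r z‖ ≤ |(clampSquare r z).re| + |(clampSquare r z).im| :=
        norm_le_abs_re_add_abs_im _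
    _ = |max (-r) (min r z.re)| + |max (-r) (min r z.im)| := rfl
    _ ≤ 2 * r := by linarith [hcoord z.re, hcoord z.im]

end Complex

open Complex

lemma ContinuousMap.isCompact_setOf_lipschitzWith_forall_mem {X E : Type*} [PseudoMetricSpace X]
    [MetricSpace E] (K : ℝ≥0) {C : Set E} (hC : IsCompact C) :
    IsCompact {f : C(X, E) | LipschitzWith K f ∧ ∀ x, f x ∈ C} := by
  apply ArzelaAscoli.isCompact_of_equicontinuous
  · have himage : ContinuousMap.toFun '' {f : C(X, E) | LipschitzWith K f ∧ ∀ x, f x ∈ C} =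
        {f : X → E | LipschitzWith K f} ∩ Set.univ.pi fun _ => C := by
      ext f
      constructor
      · rintro ⟨f, ⟨hf, hfC⟩, rfl⟩
        exact ⟨hf, fun x _ => hfC x⟩
      · rintro ⟨hf, hfC⟩
        exact ⟨⟨f, hf.continuous⟩, ⟨hf, fun x => hfC x trivial⟩, rfl⟩
    rw [himage]
    exact (isCompact_univ_pi fun _ => hC).inter_left (isClosed_setOfPred_lipschitzWith K)
  · exact (LipschitzWith.uniformEquicontinuous _ K fun f => f.2.1).equicontinuous

theorem exists_strictMono_tendstoLocallyUniformly_of_lipschitzOnWith {E : Type*} [MetricSpace E]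
    {C : Set E} (hC : IsCompact C) (K : ℝ≥0) {f : ℕ → ℂ → E}
    (hf : ∀ r, ∀ᶠ n in atTop,
      LipschitzOnWith K (f n) (closedBall 0 r) ∧ Set.MapsTo (f n) (closedBall 0 r) C) :
    ∃ φ : ℕ → ℕ, StrictMono φ ∧
      ∃ G : ℂ → E, TendstoLocallyUniformly (fun k => f (φ k)) G atTop := by
  obtain ⟨ψ, hψ, hψf⟩ := extraction_forall_of_eventually fun n : ℕ => hf (2 * n)
  have hclamp_mem : ∀ (n : ℕ) z, clampSquare n z ∈ closedBall (0 : ℂ) (2 * n) := fun n z =>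
    mem_closedBall_zero_iff.2 (norm_clampSquare_le (Nat.cast_nonneg n) z)
  have hlip : ∀ n, LipschitzWith K (f (ψ n) ∘ clampSquare n) := fun n => by
    simpa using lipschitzOnWith_univ.1 ((hψf n).1.comp (lipschitzWith_clampSquare n).lipschitzOnWith
      fun z _ => hclamp_mem n z)
  obtain ⟨G, -, φ, hφ, hG⟩ :=
    (ContinuousMap.isCompact_setOf_lipschitzWith_forall_mem K hC).tendsto_subseq
      (x := fun n => ⟨f (ψ n) ∘ clampSquare n, (hlip n).continuous⟩)
      fun n => ⟨hlip n, fun z => (hψf n).2 (hclamp_mem n z)⟩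
  rw [ContinuousMap.tendsto_iff_tendstoLocallyUniformly,
    tendstoLocallyUniformly_iff_forall_isCompact] at hG
  refine ⟨ψ ∘ φ, hψ.comp hφ, G, tendstoLocallyUniformly_iff_forall_isCompact.2 fun Q hQ => ?_⟩
  obtain ⟨r, hQr⟩ := hQ.isBounded.subset_closedBall 0
  refine (hG Q hQ).congr ?_
  filter_upwards [(tendsto_natCast_atTop_atTop.comp hφ.tendsto_atTop).eventually_ge_atTop r]
    with k hk z hz
  exact congrArg (f (ψ (φ k)))
    (clampSquare_of_norm_le ((mem_closedBall_zero_iff.1 (hQr hz)).trans hk))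

theorem lipschitzOnWith_two_closedBall_of_norm_deriv_le {E : Type*} [NormedAddCommGroup E]
    [NormedSpace ℂ E] {f : ℂ → E} {R r : ℝ} (hR : 0 < R) (hr : 2 * r ≤ R)
    (hd : DifferentiableOn ℂ f (ball 0 R))
    (hb : ∀ z ∈ ball (0 : ℂ) R, ‖deriv f z‖ ≤ R ^ 2 / (R ^ 2 - ‖z‖ ^ 2)) :
    LipschitzOnWith 2 f (closedBall 0 r) := by
  have hsub : closedBall (0 : ℂ) r ⊆ ball 0 R := closedBall_subset_ball (by linarith)
  refine (convex_closedBall _ _).lipschitzOnWith_of_nnnorm_deriv_le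
    (fun z hz => hd.differentiableAt (isOpen_ball.mem_nhds (hsub hz))) fun z hz => ?_
  have hz' : ‖z‖ ≤ r := mem_closedBall_zero_iff.1 hz
  have hbound : R ^ 2 / (R ^ 2 - ‖z‖ ^ 2) ≤ 2 := by
    rw [div_le_iff₀ (by nlinarith [norm_nonneg z])]
    nlinarith [norm_nonneg z]
  exact_mod_cast (hb z (hsub hz)).trans hbound

section Weierstrass

variable {ι E : Type*} [NormedAddCommGroup E] [NormedSpace ℂ E] [CompleteSpace E] {l : Filter ι}
  {F : ι → ℂ → E} {G : ℂ → E}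

theorem TendstoLocallyUniformly.differentiable [l.NeBot] (hF : TendstoLocallyUniformly F G l)
    (hd : ∀ r, ∀ᶠ n in l, DifferentiableOn ℂ (F n) (ball 0 r)) : Differentiable ℂ G := fun z =>
  (hF.tendstoLocallyUniformlyOn.differentiableOn (hd (‖z‖ + 1)) isOpen_ball).differentiableAt
    (isOpen_ball.mem_nhds (by simp))

theorem TendstoLocallyUniformly.tendsto_deriv (hF : TendstoLocallyUniformly F G l)
    (hd : ∀ r, ∀ᶠ n in l, DifferentiableOn ℂ (F n) (ball 0 r)) (z : ℂ) :
    Tendsto (fun n => deriv (F n) z) l (𝓝 (deriv G z)) :=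
  (hF.tendstoLocallyUniformlyOn.deriv (hd (‖z‖ + 1)) isOpen_ball).tendsto_at (by simp)

end Weierstrass

theorem brody_limit_of_bounded_derivative_sequence_general
    (N : ℕ)
    (C : Set (EuclideanSpace ℂ (Fin N))) (hC : IsCompact C)
    (R : ℕ → ℝ) (hRpos : ∀ n, 0 < R n) (hRtop : Tendsto R atTop atTop)
    (g : ℕ → ℂ → EuclideanSpace ℂ (Fin N))
    (hdiff : ∀ n, DifferentiableOn ℂ (g n) (ball (0 : ℂ) (R n)))
    (himg : ∀ n, Set.MapsTo (g n) (ball (0 : ℂ) (R n)) C)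
    (hbound : ∀ n, ∀ z ∈ ball (0 : ℂ) (R n),
      ‖deriv (g n) z‖ ≤ (R n) ^ 2 / ((R n) ^ 2 - ‖z‖ ^ 2)) :
    ∃ φ : ℕ → ℕ, StrictMono φ ∧
      ∃ G : ℂ → EuclideanSpace ℂ (Fin N), Differentiable ℂ G ∧
        Set.range G ⊆ C ∧
        TendstoLocallyUniformly (fun k => g (φ k)) G atTop ∧
        Tendsto (fun k => deriv (g (φ k)) 0) atTop (nhds (deriv G 0)) ∧
        ((∀ n, ‖deriv (g n) 0‖ = 1) → ‖deriv G 0‖ = 1) := by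
  obtain ⟨φ, hφ, G, hG⟩ := exists_strictMono_tendstoLocallyUniformly_of_lipschitzOnWith hC 2
    fun r => (hRtop.eventually_ge_atTop (2 * r)).mono fun n hn =>
      ⟨lipschitzOnWith_two_closedBall_of_norm_deriv_le (hRpos n) hn (hdiff n) (hbound n),
        (himg n).mono_left (closedBall_subset_ball (by linarith [hRpos n]))⟩
  have hR_sub : ∀ r, ∀ᶠ k in atTop, r < R (φ k) := fun r =>
    hφ.tendsto_atTop.eventually (hRtop.eventually_gt_atTop r)
  have hd : ∀ r, ∀ᶠ k in atTop, DifferentiableOn ℂ (g (φ k)) (ball 0 r) := fun r =>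
    (hR_sub r).mono fun k hk => (hdiff _).mono (ball_subset_ball hk.le)
  have hder := hG.tendsto_deriv hd 0
  refine ⟨φ, hφ, G, hG.differentiable hd, ?_, hG, hder, fun hnorm => ?_⟩
  · rintro _ ⟨z, rfl⟩
    exact hC.isClosed.mem_of_tendsto (hG.tendstoLocallyUniformlyOn.tendsto_at (Set.mem_univ z))
      ((hR_sub ‖z‖).mono fun k hk => himg _ (mem_ball_zero_iff.2 hk))
  · exact tendsto_nhds_unique hder.norm (by simp [hnorm])

theorem brody_limit_of_bounded_derivative_sequence
    (N : ℕ) (hN : 1 ≤ N)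
    (C : Set (EuclideanSpace ℂ (Fin N))) (hC : IsCompact C)
    (R : ℕ → ℝ) (hRpos : ∀ n, 0 < R n) (hRtop : Tendsto R atTop atTop)
    (g : ℕ → ℂ → EuclideanSpace ℂ (Fin N))
    (hdiff : ∀ n, DifferentiableOn ℂ (g n) (ball (0 : ℂ) (R n)))
    (himg : ∀ n, Set.MapsTo (g n) (ball (0 : ℂ) (R n)) C)
    (hbound : ∀ n, ∀ z ∈ ball (0 : ℂ) (R n),
      ‖deriv (g n) z‖ ≤ (R n) ^ 2 / ((R n) ^ 2 - ‖z‖ ^ 2)) :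
    ∃ φ : ℕ → ℕ, StrictMono φ ∧
      ∃ G : ℂ → EuclideanSpace ℂ (Fin N), Differentiable ℂ G ∧
        Set.range G ⊆ C ∧
        TendstoLocallyUniformly (fun k => g (φ k)) G atTop ∧
        Tendsto (fun k => deriv (g (φ k)) 0) atTop (nhds (deriv G 0)) ∧
        ((∀ n, ‖deriv (g n) 0‖ = 1) → ‖deriv G 0‖ = 1) :=
  brody_limit_of_bounded_derivative_sequence_general N C hC R hRpos hRtop g hdiff himg hbound
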